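/- arXiv:2207.14266 — 3 statements merged into one kernel-verified Lean document; each statement's English description precedes it below -/
import Mathlib

section
/- For every positive integer n, every real ε > 0, and every real s with s ≥ √(ln(2n(1 + 1/ε))/π), one has ∑_{x ∈ ℤⁿ, x ≠ 0} exp(−π s² ‖x‖²) ≤ ε. -/
/-!
Put `δ = exp (-π s²)`. Since `|k| ≤ k²` on `ℤ`, each term is at most `∏ᵢ δ ^ |xᵢ|`, and these
majorants sum over all of `ℤⁿ` to `((1 + δ) / (1 - δ)) ^ n`, the term `x = 0` contributing `1`.
By Bernoulli's inequality `((1 + δ) / (1 - δ)) ^ n ≤ (1 - 2nδ)⁻¹`, while the hypothesis on `s` says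
exactly `δ ≤ 1 / (2n(1 + 1/ε))`, i.e. `2nδ ≤ ε / (1 + ε)`, which makes `(1 - 2nδ)⁻¹ - 1 ≤ ε`.
-/

open Real
open scoped ENNReal

theorem HasSum.subtype_ne {α β : Type*} [AddCommGroup α] [TopologicalSpace α]
    [IsTopologicalAddGroup α] {f : β → α} {a : α} (hf : HasSum f a) (b : β) :
    HasSum (fun x : {x // x ≠ b} => f x) (a - f b) :=
  (hasSum_singleton b f).hasSum_iff_compl.1 hf

theorem hasSum_of_tsum_ofReal_eq {α : Type*} {f : α → ℝ} {a : ℝ} (hf : ∀ x, 0 ≤ f x)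
    (ha : 0 ≤ a) (h : ∑' x, ENNReal.ofReal (f x) = ENNReal.ofReal a) : HasSum f a := by
  have := ENNReal.hasSum_toReal (h ▸ ENNReal.ofReal_ne_top)
  rw [← ENNReal.tsum_toReal_eq (fun _ => ENNReal.ofReal_ne_top), h] at this
  simpa only [ENNReal.toReal_ofReal (hf _), ENNReal.toReal_ofReal ha] using this

theorem ENNReal.tsum_fin_pi_prod {n : ℕ} {α : Fin n → Type*} (f : ∀ i, α i → ℝ≥0∞) :
    ∑' x : (∀ i, α i), ∏ i, f i (x i) = ∏ i, ∑' a, f i a := by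
  induction n with
  | zero => simp
  | succ n ih =>
    rw [← (Fin.consEquiv α).tsum_eq, ENNReal.tsum_prod', Fin.prod_univ_succ]
    simp [Fin.consEquiv, Fin.prod_univ_succ, ENNReal.tsum_mul_left, ENNReal.tsum_mul_right, ih]

theorem ENNReal.tsum_int_pow_natAbs (η : ℝ≥0∞) :
    ∑' k : ℤ, η ^ k.natAbs = (1 + η) / (1 - η) := by
  rw [tsum_of_nat_of_neg_add_one ENNReal.summable ENNReal.summable]
  simp only [Int.natAbs_neg, ← Nat.cast_succ, Int.natAbs_natCast, ENNReal.tsum_geometric,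
    ENNReal.tsum_geometric_add_one, div_eq_mul_inv, add_mul, one_mul]

theorem hasSum_prod_pow_natAbs {δ : ℝ} (h0 : 0 ≤ δ) (h1 : δ < 1) (n : ℕ) :
    HasSum (fun x : Fin n → ℤ => ∏ i, δ ^ (x i).natAbs) (((1 + δ) / (1 - δ)) ^ n) := by
  have hδ₁ : 0 < 1 - δ := sub_pos.2 h1
  refine hasSum_of_tsum_ofReal_eq (fun x => by positivity) (by positivity) ?_
  have hprod (x : Fin n → ℤ) : ENNReal.ofReal (∏ i, δ ^ (x i).natAbs) =
      ∏ i, ENNReal.ofReal δ ^ (x i).natAbs := by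
    rw [ENNReal.ofReal_prod_of_nonneg (fun i _ => pow_nonneg h0 _)]
    exact Finset.prod_congr rfl fun i _ => ENNReal.ofReal_pow h0 _
  simp_rw [hprod]
  rw [ENNReal.tsum_fin_pi_prod (α := fun _ => ℤ) fun _ k => ENNReal.ofReal δ ^ k.natAbs]
  simp_rw [ENNReal.tsum_int_pow_natAbs, Finset.prod_const, Finset.card_univ, Fintype.card_fin,
    ENNReal.ofReal_pow (by positivity : 0 ≤ (1 + δ) / (1 - δ)),
    ENNReal.ofReal_div_of_pos hδ₁, ENNReal.ofReal_add zero_le_one h0,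
    ENNReal.ofReal_sub _ h0, ENNReal.ofReal_one]

theorem exp_neg_mul_sq_le_pow_natAbs {t : ℝ} (ht : 0 ≤ t) (k : ℤ) :
    exp (-t * (k : ℝ) ^ 2) ≤ exp (-t) ^ k.natAbs := by
  have hk : (k.natAbs : ℝ) ≤ (k : ℝ) ^ 2 := by
    rw [Nat.cast_natAbs]; exact_mod_cast Int.natAbs_le_self_sq k
  rw [← exp_nat_mul, exp_le_exp]
  nlinarith

theorem exp_neg_mul_sum_sq_le_prod {ι : Type*} [Fintype ι] {t : ℝ} (ht : 0 ≤ t) (x : ι → ℤ) :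
    exp (-t * ∑ i, (x i : ℝ) ^ 2) ≤ ∏ i, exp (-t) ^ (x i).natAbs := by
  rw [Finset.mul_sum, exp_sum]
  exact Finset.prod_le_prod (fun _ _ => (exp_pos _).le)
    fun i _ => exp_neg_mul_sq_le_pow_natAbs ht (x i)

theorem pow_one_add_div_one_sub_le_inv {δ : ℝ} (h0 : 0 ≤ δ) {n : ℕ} (h : 2 * n * δ < 1) :
    ((1 + δ) / (1 - δ)) ^ n ≤ (1 - 2 * n * δ)⁻¹ := by
  have hδ : 0 < 1 + δ := by linarith
  -- Bernoulli's inequality applied to `(1 - δ) / (1 + δ) = 1 - 2δ / (1 + δ)`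
  have hbernoulli : 1 - 2 * n * δ ≤ ((1 - δ) / (1 + δ)) ^ n := by
    have hle : -2 ≤ -(2 * δ / (1 + δ)) := by
      rw [neg_le_neg_iff, div_le_iff₀ hδ]; linarith
    calc 1 - 2 * n * δ ≤ 1 + n * -(2 * δ / (1 + δ)) := by
          have : 2 * δ / (1 + δ) ≤ 2 * δ := div_le_self (by positivity) (by linarith)
          nlinarith [n.cast_nonneg (α := ℝ)]
      _ ≤ (1 + -(2 * δ / (1 + δ))) ^ n := one_add_mul_le_pow hle n
      _ = ((1 - δ) / (1 + δ)) ^ n := by congr 1; field_simp; ring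
  rw [← inv_div, inv_pow]
  exact inv_anti₀ (by linarith) hbernoulli

theorem inv_one_sub_le_one_add {x ε : ℝ} (hε : 0 ≤ ε) (hx : x ≤ ε / (1 + ε)) :
    (1 - x)⁻¹ ≤ 1 + ε := by
  have h : (1 + ε)⁻¹ ≤ 1 - x := by
    have : 1 - ε / (1 + ε) = (1 + ε)⁻¹ := by field_simp; ring
    linarith
  simpa using inv_anti₀ (by positivity) h

theorem exp_neg_pi_mul_sq_le_inv {c s : ℝ} (hc : 0 < c) (hs : √(log c / π) ≤ s) :
    exp (-(π * s ^ 2)) ≤ c⁻¹ := by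
  have hlog : log c ≤ π * s ^ 2 := by
    rw [← div_le_iff₀' pi_pos]; exact (sqrt_le_iff.1 hs).2
  rw [← exp_log (inv_pos.2 hc), log_inv, exp_le_exp]
  linarith

/-- For every positive integer `n`, every real `ε > 0`, and every real
`s ≥ √(ln(2n(1 + 1/ε))/π)`, the Gaussian mass of the nonzero integer vectors satisfies
`∑_{x ∈ ℤⁿ, x ≠ 0} exp(−π s² ‖x‖²) ≤ ε`. -/
theorem smoothing_parameter_bound (n : ℕ) (hn : 0 < n) (ε : ℝ) (hε : 0 < ε) (s : ℝ)
    (hs : s ≥ Real.sqrt (Real.log (2 * n * (1 + 1 / ε)) / Real.pi)) :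
    ∑' x : {x : Fin n → ℤ // x ≠ 0},
      Real.exp (-Real.pi * s ^ 2 * ∑ i, ((x.1 i : ℝ)) ^ 2) ≤ ε := by
  set δ := exp (-(π * s ^ 2))
  have hδ_pos : 0 < δ := exp_pos _
  have hnδ : 2 * n * δ ≤ ε / (1 + ε) :=
    calc 2 * n * δ ≤ 2 * n * (2 * n * (1 + 1 / ε))⁻¹ := by
          gcongr; exact exp_neg_pi_mul_sq_le_inv (by positivity) hs
      _ = ε / (1 + ε) := by field_simp; ring
  have hnδ_lt_one : 2 * n * δ < 1 := hnδ.trans_lt ((div_lt_one (by positivity)).2 (by linarith))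
  have hδ_lt_one : δ < 1 := by
    have : (1 : ℝ) ≤ n := by exact_mod_cast hn
    nlinarith
  have hmajorant := (hasSum_prod_pow_natAbs hδ_pos.le hδ_lt_one n).subtype_ne 0
  simp only [Pi.zero_apply, Int.natAbs_zero, pow_zero, Finset.prod_const_one] at hmajorant
  have hterm (x : {x : Fin n → ℤ // x ≠ 0}) :
      exp (-π * s ^ 2 * ∑ i, (x.1 i : ℝ) ^ 2) ≤ ∏ i, δ ^ (x.1 i).natAbs := by
    rw [neg_mul]; exact exp_neg_mul_sum_sq_le_prod (by positivity) x.1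
  calc ∑' x : {x : Fin n → ℤ // x ≠ 0}, exp (-π * s ^ 2 * ∑ i, (x.1 i : ℝ) ^ 2)
      ≤ ((1 + δ) / (1 - δ)) ^ n - 1 :=
        hasSum_le hterm (hmajorant.summable.of_nonneg_of_le (fun _ => (exp_pos _).le) hterm).hasSum
          hmajorant
    _ ≤ (1 - 2 * n * δ)⁻¹ - 1 := by
        gcongr; exact pow_one_add_div_one_sub_le_inv hδ_pos.le hnδ_lt_one
    _ ≤ ε := by linarith [inv_one_sub_le_one_add hε.le hnδ]
end

section
/- Let n be a positive integer, ε ∈ (0,1), and σ > 0 satisfy ∑_{x ∈ ℤⁿ, x ≠ 0} exp(−π σ² ‖x‖²) ≤ ε. Then for every vector v ∈ ℝⁿ, the Gaussian mass of the shifted integer lattice satisfies 1 − ε ≤ ∑_{x ∈ ℤⁿ} σ^{−n} exp(−π ‖x + v‖²/σ²) ≤ 1 + ε. -/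
open scoped Real
open Real Complex

/-- Factorization of a tsum over `Fin n → ℤ` of a product of nonneg summable functions. -/
lemma gms_tsum_pi_prod : ∀ {n : ℕ} (f : Fin n → ℤ → ℝ), (∀ i m, 0 ≤ f i m) →
    (∀ i, Summable (f i)) →
    Summable (fun x : Fin n → ℤ => ∏ i, f i (x i)) ∧
      ∑' x : Fin n → ℤ, ∏ i, f i (x i) = ∏ i, ∑' m, f i m := by
  intro n
  induction n with
  | zero =>
    intro f _ _
    refine ⟨.of_finite, ?_⟩
    simp
  | succ n ih =>
    intro f h0 hf
    obtain ⟨hs, he⟩ := ih (fun i => f i.succ) (fun i m => h0 i.succ m) (fun i => hf i.succ)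
    have hF : Summable (fun p : ℤ × (Fin n → ℤ) => f 0 p.1 * ∏ i, f i.succ (p.2 i)) := by
      apply Summable.mul_of_nonneg (hf 0) hs
      · exact fun m => h0 0 m
      · exact fun y => Finset.prod_nonneg fun i _ => h0 i.succ (y i)
    have hkey : ∀ x : Fin (n + 1) → ℤ,
        ∏ i, f i (x i) = f 0 (x 0) * ∏ i : Fin n, f i.succ (x i.succ) := fun x =>
      Fin.prod_univ_succ _
    have hcomp : (fun x : Fin (n + 1) → ℤ => ∏ i, f i (x i)) =
        fun x => (fun p : ℤ × (Fin n → ℤ) => f 0 p.1 * ∏ i, f i.succ (p.2 i))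
          ((Fin.consEquiv fun _ : Fin (n + 1) => ℤ).symm x) := funext hkey
    have hsum : Summable (fun x : Fin (n + 1) → ℤ => ∏ i, f i (x i)) := by
      rw [hcomp]
      apply (Equiv.summable_iff _).mpr hF
    refine ⟨hsum, ?_⟩
    calc ∑' x : Fin (n + 1) → ℤ, ∏ i, f i (x i)
        = ∑' p : ℤ × (Fin n → ℤ), f 0 p.1 * ∏ i, f i.succ (p.2 i) := by
          rw [hcomp]
          apply Equiv.tsum_eq ((Fin.consEquiv fun _ : Fin (n+1) => ℤ).symm)
            (fun p => f 0 p.1 * ∏ i : Fin n, f i.succ (p.2 i))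
      _ = ∑' b : ℤ, ∑' c : Fin n → ℤ, f 0 b * ∏ i, f i.succ (c i) := Summable.tsum_prod hF
      _ = ∑' b : ℤ, f 0 b * ∑' c : Fin n → ℤ, ∏ i, f i.succ (c i) :=
          tsum_congr fun b => tsum_mul_left
      _ = (∑' b : ℤ, f 0 b) * ∑' c : Fin n → ℤ, ∏ i, f i.succ (c i) := tsum_mul_right
      _ = ∏ i, ∑' m, f i m := by rw [he, Fin.prod_univ_succ]

lemma gms_two_le {δ : ℝ} (h0 : 0 ≤ δ) (h1 : δ ≤ 1) (n : ℕ) :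
    2 ≤ (1 + δ) ^ n + (1 - δ) ^ n := by
  induction n with
  | zero => norm_num
  | succ n ih =>
    have p1 : (1:ℝ) ≤ (1 + δ) ^ n := one_le_pow₀ (by linarith)
    have p2 : (0:ℝ) ≤ (1 - δ) ^ n := pow_nonneg (by linarith) n
    have p3 : (1 - δ) ^ n ≤ 1 := pow_le_one₀ (by linarith) (by linarith)
    rw [pow_succ, pow_succ]
    nlinarith

lemma gms_tsum_ne {α : Type*} [DecidableEq α] (F : α → ℝ) (hF : Summable F) (a₀ : α) :
    ∑' x : {x : α // x ≠ a₀}, F x = (∑' x, F x) - F a₀ := by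
  have h1 := Summable.tsum_eq_add_tsum_ite hF a₀
  have h2 : ∑' x : {x : α // x ≠ a₀}, F x = ∑' x, if x = a₀ then 0 else F x := by
    refine (tsum_subtype {x : α | x ≠ a₀} F).trans (tsum_congr fun x => ?_)
    by_cases hx : x = a₀ <;> simp [Set.indicator_apply, hx]
  rw [h2]; linarith

lemma gms_summable_g {σ : ℝ} (hσ : 0 < σ) :
    Summable (fun m : ℤ => Real.exp (-π * σ^2 * (m:ℝ)^2)) := by
  have h1 : Summable (fun m : ℤ => jacobiTheta₂_term m 0 ((σ:ℂ)^2 * I)) := by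
    apply (summable_jacobiTheta₂_term_iff 0 _).mpr
    rw [← Complex.ofReal_pow, Complex.mul_I_im, Complex.ofReal_re]
    exact pow_pos hσ 2
  have h2 : Summable (fun m : ℤ => ‖jacobiTheta₂_term m 0 ((σ:ℂ)^2 * I)‖) :=
    (summable_norm_iff (E := ℂ)).mpr h1
  refine h2.congr fun m => ?_
  rw [norm_jacobiTheta₂_term, ← Complex.ofReal_pow]
  simp only [Complex.mul_I_im, Complex.ofReal_re, Complex.zero_im]
  ring_nf

lemma gms_summable_shift {σ : ℝ} (hσ : 0 < σ) (t : ℝ) :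
    Summable (fun m : ℤ => Real.exp (-π * ((m:ℝ) + t)^2 / σ^2)) := by
  have h1 : Summable (fun m : ℤ =>
      jacobiTheta₂_term m (((t/σ^2 : ℝ) : ℂ) * I) ((((σ^2)⁻¹ : ℝ) : ℂ) * I)) := by
    apply (summable_jacobiTheta₂_term_iff _ _).mpr
    rw [Complex.mul_I_im, Complex.ofReal_re]
    exact inv_pos.mpr (pow_pos hσ 2)
  have h2 : Summable (fun m : ℤ =>
      ‖jacobiTheta₂_term m (((t/σ^2 : ℝ) : ℂ) * I) ((((σ^2)⁻¹ : ℝ) : ℂ) * I)‖) :=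
    (summable_norm_iff (E := ℂ)).mpr h1
  have h3 := h2.mul_left (Real.exp (-π * t^2 / σ^2))
  refine h3.congr fun m => ?_
  rw [norm_jacobiTheta₂_term, ← Real.exp_add]
  congr 1
  simp only [Complex.mul_I_im, Complex.ofReal_re]
  have hσ2 : σ^2 ≠ 0 := (pow_pos hσ 2).ne'
  field_simp
  ring

lemma gms_key {σ : ℝ} (hσ : 0 < σ) (t : ℝ) :
    |(∑' m : ℤ, Real.exp (-π * ((m:ℝ) + t)^2 / σ^2)) / σ - 1|
      ≤ ∑' m : ℤ, (if m = 0 then 0 else Real.exp (-π * σ^2 * (m:ℝ)^2)) := by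
  set a : ℂ := ((σ^2 : ℝ) : ℂ) with ha_def
  have ha : 0 < a.re := by rw [ha_def, Complex.ofReal_re]; positivity
  set fS : ℤ → ℂ := fun n => Complex.exp (-↑π * a * (n:ℂ)^2 + 2*↑π*(-I*(t:ℂ))*(n:ℂ)) with hfS_def
  have htheta : ∀ n : ℤ, fS n = jacobiTheta₂_term n (-(t:ℂ)) (a * I) := by
    intro n
    rw [hfS_def, jacobiTheta₂_term]
    apply congrArg Complex.exp
    ring_nf
    rw [Complex.I_sq]
    ring
  have hfS : Summable fS := by
    rw [funext htheta]
    apply (summable_jacobiTheta₂_term_iff _ _).mpr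
    rw [Complex.mul_I_im, ha_def, Complex.ofReal_re]
    positivity
  set R : ℝ := ∑' m : ℤ, Real.exp (-π * ((m:ℝ) + t)^2 / σ^2) with hR_def
  have hsq : a ^ (1/2 : ℂ) = (σ:ℂ) := by
    rw [ha_def, show (1/2 : ℂ) = ((1/2 : ℝ) : ℂ) by norm_num,
      ← Complex.ofReal_cpow (sq_nonneg σ)]
    congr 1
    rw [← Real.rpow_natCast σ 2, ← Real.rpow_mul hσ.le]
    norm_num
  have ht : (I * (-I * (t:ℂ)) : ℂ) = (t:ℂ) := by
    rw [show I * (-I * (t:ℂ)) = -(I*I)*(t:ℂ) by ring, Complex.I_mul_I]; ring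
  have hR : (∑' n : ℤ, fS n) = (1/(σ:ℂ)) * ((R : ℝ) : ℂ) := by
    rw [hfS_def]
    rw [Complex.tsum_exp_neg_quadratic ha (-I*(t:ℂ)), hsq]
    congr 1
    rw [hR_def, Complex.ofReal_tsum]
    refine tsum_congr fun n => ?_
    rw [ht, Complex.ofReal_exp]
    congr 1
    rw [ha_def]
    push_cast
    field_simp
  have hfS0 : fS 0 = 1 := by
    rw [hfS_def]
    simp
  have hiso := Summable.tsum_eq_add_tsum_ite hfS 0
  have hnorm_term : ∀ n : ℤ, ‖(if n = 0 then 0 else fS n)‖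
      = (if n = 0 then 0 else Real.exp (-π * σ^2 * (n:ℝ)^2)) := by
    intro n
    by_cases hn : n = 0
    · simp [hn]
    · rw [if_neg hn, if_neg hn, htheta n, norm_jacobiTheta₂_term]
      rw [Complex.mul_I_im, ha_def, Complex.ofReal_re]
      simp only [Complex.neg_im, Complex.ofReal_im]
      ring_nf
  have hD_sum : Summable (fun n : ℤ => if n = 0 then 0 else Real.exp (-π * σ^2 * (n:ℝ)^2)) := by
    refine Summable.of_nonneg_of_le (fun n => ?_) (fun n => ?_) (gms_summable_g hσ)
    · by_cases hn : n = 0 <;> simp [hn, Real.exp_nonneg]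
    · by_cases hn : n = 0 <;> simp [hn, Real.exp_nonneg]
  have hnormsum : Summable (fun n : ℤ => ‖(if n = 0 then 0 else fS n)‖) :=
    hD_sum.congr fun n => (hnorm_term n).symm
  have hbound : ‖∑' n : ℤ, (if n = 0 then 0 else fS n)‖
      ≤ ∑' m : ℤ, (if m = 0 then 0 else Real.exp (-π * σ^2 * (m:ℝ)^2)) := by
    refine (norm_tsum_le_tsum_norm hnormsum).trans_eq ?_
    exact tsum_congr hnorm_term
  have hfinal : ((R/σ - 1 : ℝ) : ℂ) = ∑' n : ℤ, (if n = 0 then 0 else fS n) := by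
    have : (∑' n : ℤ, fS n) = 1 + ∑' n : ℤ, (if n = 0 then 0 else fS n) := by
      rw [hiso, hfS0]
    have h3 : (∑' n : ℤ, (if n = 0 then 0 else fS n)) = 1/(σ:ℂ) * ((R:ℝ):ℂ) - 1 := by
      rw [← hR, this]; ring
    rw [h3]
    push_cast
    ring
  calc |R/σ - 1| = ‖((R/σ - 1 : ℝ) : ℂ)‖ := by rw [Complex.norm_real, Real.norm_eq_abs]
    _ ≤ _ := by rw [hfinal]; exact hbound

/-- Let `n` be a positive integer, `ε ∈ (0,1)`, and `σ > 0` satisfy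
`∑_{x ∈ ℤⁿ, x ≠ 0} exp(−π σ² ‖x‖²) ≤ ε`. Then for every `v ∈ ℝⁿ`, the Gaussian mass of the
shifted integer lattice satisfies `1 − ε ≤ ∑_{x ∈ ℤⁿ} σ⁻ⁿ exp(−π ‖x + v‖²/σ²) ≤ 1 + ε`. -/
theorem gaussian_mass_shifted_lattice (n : ℕ) (hn : 0 < n) (ε : ℝ) (hε : ε ∈ Set.Ioo (0:ℝ) 1)
    (σ : ℝ) (hσ : 0 < σ)
    (h : ∑' x : {x : Fin n → ℤ // x ≠ 0},
        Real.exp (-Real.pi * σ ^ 2 * ∑ i, ((x.1 i : ℝ)) ^ 2) ≤ ε)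
    (v : Fin n → ℝ) :
    1 - ε ≤ (∑' x : Fin n → ℤ,
        (σ ^ n)⁻¹ * Real.exp (-Real.pi * (∑ i, ((x i : ℝ) + v i) ^ 2) / σ ^ 2)) ∧
      (∑' x : Fin n → ℤ,
        (σ ^ n)⁻¹ * Real.exp (-Real.pi * (∑ i, ((x i : ℝ) + v i) ^ 2) / σ ^ 2)) ≤ 1 + ε := by
  -- the one-dimensional unshifted Gaussian
  set g : ℤ → ℝ := fun m => Real.exp (-π * σ^2 * (m:ℝ)^2) with hg_def
  have hg : Summable g := gms_summable_g hσ
  have hg0 : ∀ m, 0 ≤ g m := fun m => Real.exp_nonneg _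
  set G : ℝ := ∑' m : ℤ, g m with hG_def
  set D : ℝ := ∑' m : ℤ, (if m = 0 then 0 else g m) with hD_def
  have hg_zero : g 0 = 1 := by simp [hg_def]
  have hGD : G = 1 + D := by rw [hG_def, hD_def, Summable.tsum_eq_add_tsum_ite hg 0, hg_zero]
  have hD0 : 0 ≤ D := by
    rw [hD_def]
    refine tsum_nonneg fun m => ?_
    by_cases hm : m = 0
    · simp [hm]
    · simpa [hm] using hg0 m
  -- the n-dimensional unshifted Gaussian sum factorizes
  obtain ⟨hsumG, heG⟩ := gms_tsum_pi_prod (fun _ : Fin n => g) (fun _ m => hg0 m)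
    (fun _ => hg)
  set F : (Fin n → ℤ) → ℝ := fun y => Real.exp (-π * σ^2 * ∑ i, ((y i : ℝ))^2) with hF_def
  have hFeq : ∀ y : Fin n → ℤ, F y = ∏ i, g (y i) := by
    intro y
    simp only [hF_def, hg_def]
    rw [Finset.mul_sum, Real.exp_sum]
  have hFsum : Summable F := hsumG.congr fun y => (hFeq y).symm
  have hFtot : (∑' y : Fin n → ℤ, F y) = G ^ n := by
    rw [tsum_congr hFeq, heG]
    simp [hG_def]
  have hF0 : F 0 = 1 := by simp [hF_def]
  have hGn : G ^ n - 1 ≤ ε := by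
    have e1 := gms_tsum_ne F hFsum 0
    rw [hFtot, hF0] at e1
    calc G ^ n - 1 = ∑' x : {x : Fin n → ℤ // x ≠ 0}, F x.1 := e1.symm
      _ ≤ ε := h
  have hn1 : (1:ℝ) ≤ (n:ℝ) := by exact_mod_cast hn
  have hDε : D ≤ ε := by
    have h1 : 1 + (n:ℝ) * D ≤ (1 + D) ^ n := one_add_mul_le_pow (by linarith) n
    rw [hGD] at hGn
    nlinarith
  have hD1 : D ≤ 1 := hDε.trans hε.2.le
  -- the shifted one-dimensional sums
  set f : Fin n → ℤ → ℝ := fun i m => Real.exp (-π * ((m:ℝ) + v i)^2 / σ^2) with hf_def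
  have hf : ∀ i, Summable (f i) := fun i => gms_summable_shift hσ (v i)
  have hf0 : ∀ i m, 0 ≤ f i m := fun i m => Real.exp_nonneg _
  obtain ⟨hsumT, heT⟩ := gms_tsum_pi_prod f hf0 hf
  set R : Fin n → ℝ := fun i => ∑' m : ℤ, f i m with hR_def
  have hkey : ∀ i, |R i / σ - 1| ≤ D := fun i => gms_key hσ (v i)
  have hlow : ∀ i, 1 - D ≤ R i / σ := fun i => by
    have := abs_le.mp (hkey i); linarith [this.1]
  have hhigh : ∀ i, R i / σ ≤ 1 + D := fun i => by
    have := abs_le.mp (hkey i); linarith [this.2]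
  have hnn : (0:ℝ) ≤ 1 - D := by linarith [hDε, hε.2]
  -- rewrite the target sum
  have hTeq : (∑' x : Fin n → ℤ,
      (σ ^ n)⁻¹ * Real.exp (-Real.pi * (∑ i, ((x i : ℝ) + v i) ^ 2) / σ ^ 2))
      = ∏ i, (R i / σ) := by
    rw [tsum_mul_left]
    have e2 : ∀ x : Fin n → ℤ,
        Real.exp (-Real.pi * (∑ i, ((x i : ℝ) + v i) ^ 2) / σ ^ 2) = ∏ i, f i (x i) := by
      intro x
      rw [hf_def]
      rw [← Real.exp_sum]
      congr 1
      rw [← Finset.sum_div, ← Finset.mul_sum]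
    rw [tsum_congr e2, heT]
    rw [Finset.prod_div_distrib]
    simp only [Finset.prod_const, Finset.card_univ, Fintype.card_fin]
    rw [inv_mul_eq_div]
  have hprod_low : (1 - D) ^ n ≤ ∏ i, (R i / σ) := by
    calc (1 - D) ^ n = ∏ _i : Fin n, (1 - D) := by
          simp [Finset.prod_const]
      _ ≤ ∏ i, (R i / σ) :=
          Finset.prod_le_prod (fun i _ => hnn) (fun i _ => hlow i)
  have hprod_high : ∏ i, (R i / σ) ≤ (1 + D) ^ n := by
    calc ∏ i, (R i / σ) ≤ ∏ _i : Fin n, (1 + D) :=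
          Finset.prod_le_prod (fun i _ => le_trans hnn (hlow i)) (fun i _ => hhigh i)
      _ = (1 + D) ^ n := by simp [Finset.prod_const]
  have htwo := gms_two_le hD0 hD1 n
  rw [hGD] at hGn
  constructor
  · rw [hTeq]; linarith [hprod_low]
  · rw [hTeq]; linarith [hprod_high]
end

section
/- Let n be a positive integer, ε ∈ (0, 1/3), and σ ≥ √(ln(2n(1 + 1/ε))/π). Let γ be the probability measure on ℝⁿ with Lebesgue density ρ_σ(x) = σ^{−n} exp(−π‖x‖²/σ²), and let μ be the pushforward of γ under the coordinatewise fractional-part map mod₁ : ℝⁿ → [0,1)ⁿ. Then for every Borel set A ⊆ [0,1)ⁿ, |μ(A) − λ(A)| ≤ ε, where λ denotes Lebesgue measure; that is, the total variation distance between the collapsed Gaussian distribution and the uniform distribution on [0,1)ⁿ is at most ε. -/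
/-!
Fold the Gaussian onto the unit cube: the density of `μ` at `y ∈ [0,1)ⁿ` is
`∑ₖ ρ_σ(y + k) = ∏ᵢ f(yᵢ)` with `f(z) = σ⁻¹ ∑ₖ exp(-π(z + k)²/σ²)`. By Poisson summation
(the functional equation of Jacobi's theta function), `f(z) = ∑ₘ qᵐ² e^{2πimz}` with
`q = exp(-πσ²)`, so `|f(z) - 1| ≤ 2q/(1 - q²) =: a`. Hence the density differs from `1` by at
most `(1 + a)ⁿ - 1`, and the lower bound on `σ` makes `q ≤ ε/(2n(1 + ε))`, which forces
`(1 + a)ⁿ ≤ exp(na) ≤ 1 + na + (na)² ≤ 1 + ε`.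
-/

open MeasureTheory Real Set Function
open scoped ENNReal

lemma norm_jacobiTheta₂_ofReal_sub_one_le (x : ℝ) {τ : ℂ} (hτ : 0 < τ.im) :
    ‖jacobiTheta₂ x τ - 1‖ ≤ 2 * (rexp (-π * τ.im) / (1 - rexp (-π * τ.im) ^ 2)) := by
  set q := rexp (-π * τ.im)
  have hq1 : q < 1 := exp_lt_one_iff.2 (by nlinarith [pi_pos])
  -- `(k + 1)² ≥ 2k + 1` turns each half of the tail into a geometric series
  have hterm : ∀ (k : ℕ) (n : ℤ), n ^ 2 = ((k : ℤ) + 1) ^ 2 →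
      ‖jacobiTheta₂_term n x τ‖ ≤ q * (q ^ 2) ^ k := by
    intro k n hn
    have hn' : (n : ℝ) ^ 2 = (k + 1) ^ 2 := by exact_mod_cast hn
    rw [norm_jacobiTheta₂_term, Complex.ofReal_im, hn', ← pow_mul, ← pow_succ', ← exp_nat_mul,
      exp_le_exp]
    push_cast
    nlinarith [mul_nonneg (mul_nonneg pi_pos.le hτ.le) (sq_nonneg (k : ℝ))]
  have hgeom : HasSum (fun k : ℕ => q * (q ^ 2) ^ k) (q / (1 - q ^ 2)) := by
    have := (hasSum_geometric_of_lt_one (sq_nonneg q)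
      (by nlinarith [exp_pos (-π * τ.im)])).mul_left q
    rwa [← div_eq_mul_inv] at this
  have hsum := (hasSum_jacobiTheta₂_term (x : ℂ) hτ).summable
  have hpos : Summable fun n : ℕ => jacobiTheta₂_term (n + 1) x τ :=
    hsum.comp_injective (i := fun n : ℕ => (n + 1 : ℤ)) fun _ _ h => by simpa using h
  have hneg : Summable fun n : ℕ => jacobiTheta₂_term (-(n + 1)) x τ :=
    hsum.comp_injective (i := fun n : ℕ => (-(n + 1) : ℤ)) fun _ _ h => by simpa using h
  have h0 : jacobiTheta₂_term 0 x τ = 1 := by simp [jacobiTheta₂_term]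
  rw [jacobiTheta₂,
    tsum_of_add_one_of_neg_add_one (f := fun n => jacobiTheta₂_term n x τ) hpos hneg, h0,
    add_sub_right_comm, add_sub_cancel_right, two_mul]
  refine (norm_add_le _ _).trans (add_le_add ?_ ?_) <;>
    exact tsum_of_norm_bounded hgeom fun k => hterm k _ (by ring)

/-- Poisson summation for the Gaussian of width `σ`, read off from the functional equation of
`jacobiTheta₂` at the point `(iz/σ², i/σ²)`. -/
lemma hasSum_exp_neg_sq_add_int_div_sq {σ : ℝ} (hσ : 0 < σ) (z : ℝ) :
    HasSum (fun n : ℤ => rexp (-π * (z + n) ^ 2 / σ ^ 2))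
      (σ * (jacobiTheta₂ z (Complex.I * σ ^ 2)).re) := by
  have hσ' : (σ : ℂ) ≠ 0 := Complex.ofReal_ne_zero.2 hσ.ne'
  have hterm : ∀ n : ℤ, jacobiTheta₂_term n (Complex.I * z / σ ^ 2) (Complex.I / σ ^ 2) =
      ((rexp (π * z ^ 2 / σ ^ 2) * rexp (-π * (z + n) ^ 2 / σ ^ 2) : ℝ) : ℂ) := by
    intro n
    rw [jacobiTheta₂_term, ← Real.exp_add, Complex.ofReal_exp]
    push_cast
    congr 1
    field_simp
    ring_nf
    rw [Complex.I_sq]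
    ring
  have hτ : 0 < (Complex.I / σ ^ 2).im := by
    rw [← Complex.ofReal_pow, Complex.div_ofReal_im, Complex.I_im]; positivity
  have hroot : (-Complex.I * (Complex.I / σ ^ 2)) ^ (1 / 2 : ℂ) = (σ : ℂ)⁻¹ := by
    rw [one_div, ← Complex.sq_cpow_two_inv (x := (σ : ℂ)⁻¹) (by simpa using hσ)]
    congr 1
    field_simp
    ring_nf
    rw [Complex.I_sq]
    ring
  have hz : Complex.I * z / σ ^ 2 / (Complex.I / σ ^ 2) = z := by field_simp
  have hτ' : -1 / (Complex.I / σ ^ 2) = Complex.I * σ ^ 2 := by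
    field_simp
    rw [Complex.I_sq]
  have he : -π * Complex.I * (Complex.I * z / σ ^ 2) ^ 2 / (Complex.I / σ ^ 2) =
      ((π * z ^ 2 / σ ^ 2 : ℝ) : ℂ) := by
    push_cast
    field_simp
    ring_nf
    rw [Complex.I_sq]
    ring
  have hθ := Complex.hasSum_re (hasSum_jacobiTheta₂_term (Complex.I * z / σ ^ 2) hτ)
  rw [jacobiTheta₂_functional_equation, hroot, hz, hτ', he, ← Complex.ofReal_exp, one_div,
    inv_inv] at hθ
  simp only [hterm, Complex.ofReal_re] at hθ
  rw [← Complex.ofReal_mul, mul_comm σ, Complex.re_ofReal_mul, mul_assoc] at hθ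
  exact (hasSum_mul_left_iff (exp_ne_zero _)).1 hθ

lemma abs_inv_mul_tsum_exp_neg_sq_add_int_sub_one_le {σ : ℝ} (hσ : 0 < σ) (z : ℝ) :
    |σ⁻¹ * ∑' n : ℤ, rexp (-π * (z + n) ^ 2 / σ ^ 2) - 1| ≤
      2 * (rexp (-π * σ ^ 2) / (1 - rexp (-π * σ ^ 2) ^ 2)) := by
  have him : (Complex.I * σ ^ 2).im = σ ^ 2 := by simp [← Complex.ofReal_pow]
  rw [(hasSum_exp_neg_sq_add_int_div_sq hσ z).tsum_eq, inv_mul_cancel_left₀ hσ.ne']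
  calc |(jacobiTheta₂ z (Complex.I * σ ^ 2)).re - 1|
      = |(jacobiTheta₂ z (Complex.I * σ ^ 2) - 1).re| := by simp
    _ ≤ ‖jacobiTheta₂ z (Complex.I * σ ^ 2) - 1‖ := Complex.abs_re_le_norm _
    _ ≤ _ := by
      have := norm_jacobiTheta₂_ofReal_sub_one_le z (τ := Complex.I * σ ^ 2)
        (by rw [him]; positivity)
      rwa [him] at this

lemma ENNReal.tsum_pi_prod_eq_prod_tsum {κ : Type*} :
    ∀ {n : ℕ} (f : Fin n → κ → ℝ≥0∞), ∑' k : Fin n → κ, ∏ i, f i (k i) = ∏ i, ∑' m, f i m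
  | 0, f => by simp
  | n + 1, f => by
    rw [← (Fin.consEquiv fun _ => κ).tsum_eq]
    simp only [Fin.consEquiv_apply, Fin.prod_univ_succ, Fin.cons_zero, Fin.cons_succ]
    rw [ENNReal.tsum_prod', ← ENNReal.tsum_pi_prod_eq_prod_tsum fun i => f i.succ,
      ← ENNReal.tsum_mul_right]
    simp_rw [ENNReal.tsum_mul_left]

lemma tsum_ofReal_gaussian_add_intCast {n : ℕ} {σ : ℝ} (hσ : 0 < σ) (y : Fin n → ℝ) :
    ∑' k : Fin n → ℤ, ENNReal.ofReal ((σ ^ n)⁻¹ * rexp (-π * (∑ i, (y i + k i) ^ 2) / σ ^ 2)) =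
      ENNReal.ofReal (∏ i, σ⁻¹ * ∑' m : ℤ, rexp (-π * (y i + m) ^ 2 / σ ^ 2)) := by
  have hfactor : ∀ k : Fin n → ℤ,
      ENNReal.ofReal ((σ ^ n)⁻¹ * rexp (-π * (∑ i, (y i + k i) ^ 2) / σ ^ 2)) =
        ∏ i, ENNReal.ofReal (σ⁻¹ * rexp (-π * (y i + k i) ^ 2 / σ ^ 2)) := by
    intro k
    rw [← ENNReal.ofReal_prod_of_nonneg fun i _ => by positivity, Finset.prod_mul_distrib,
      Finset.prod_const, Finset.card_univ, Fintype.card_fin, inv_pow, ← exp_sum, Finset.mul_sum,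
      Finset.sum_div]
  rw [tsum_congr hfactor, ENNReal.tsum_pi_prod_eq_prod_tsum
    fun i (m : ℤ) => ENNReal.ofReal (σ⁻¹ * rexp (-π * (y i + m) ^ 2 / σ ^ 2)),
    ENNReal.ofReal_prod_of_nonneg fun i _ => by
      positivity [(hasSum_exp_neg_sq_add_int_div_sq hσ (y i)).nonneg fun _ => (exp_pos _).le]]
  refine Finset.prod_congr rfl fun i _ => ?_
  rw [← ENNReal.ofReal_tsum_of_nonneg (fun m => by positivity)
    ((hasSum_exp_neg_sq_add_int_div_sq hσ (y i)).summable.mul_left σ⁻¹), tsum_mul_left]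

lemma abs_prod_sub_one_le {ι : Type*} (s : Finset ι) {x : ι → ℝ} {a : ℝ}
    (h : ∀ i ∈ s, |x i - 1| ≤ a) : |∏ i ∈ s, x i - 1| ≤ (1 + a) ^ s.card - 1 := by
  classical
  induction s using Finset.induction_on with
  | empty => simp
  | insert j s hj ih =>
    have hj1 := h j (Finset.mem_insert_self j s)
    have hs := ih fun i hi => h i (Finset.mem_insert_of_mem hi)
    have hxj : |x j| ≤ 1 + a := by
      calc |x j| = |(x j - 1) + 1| := by ring_nf
        _ ≤ |x j - 1| + 1 := by simpa using abs_add_le (x j - 1) 1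
        _ ≤ 1 + a := by linarith
    rw [Finset.prod_insert hj, Finset.card_insert_of_notMem hj, pow_succ]
    calc |x j * ∏ i ∈ s, x i - 1| = |x j * (∏ i ∈ s, x i - 1) + (x j - 1)| := by ring_nf
      _ ≤ |x j| * |∏ i ∈ s, x i - 1| + |x j - 1| := by
        rw [← abs_mul]; exact abs_add_le _ _
      _ ≤ (1 + a) * ((1 + a) ^ s.card - 1) + a :=
        add_le_add (mul_le_mul hxj hs (abs_nonneg _) (by linarith [abs_nonneg (x j)])) hj1
      _ = (1 + a) ^ s.card * (1 + a) - 1 := by ring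

section Folding

variable {ι : Type*}

lemma sub_intCast_mem_iff {A : Set (ι → ℝ)} (hA : A ⊆ univ.pi fun _ => Ico (0 : ℝ) 1)
    (x : ι → ℝ) (k : ι → ℤ) :
    x - (fun i => (k i : ℝ)) ∈ A ↔ k = (fun i => ⌊x i⌋) ∧ (fun i => Int.fract (x i)) ∈ A := by
  constructor
  · intro hx
    have hk : k = fun i => ⌊x i⌋ := by
      funext i
      have := mem_univ_pi.1 (hA hx) i
      simp only [Pi.sub_apply, mem_Ico, sub_nonneg, sub_lt_iff_lt_add'] at this
      exact (Int.floor_eq_iff.2 ⟨this.1, by linarith⟩).symm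
    subst hk
    exact ⟨rfl, hx⟩
  · rintro ⟨rfl, hx⟩
    exact hx

lemma preimage_fract_eq_iUnion {A : Set (ι → ℝ)} (hA : A ⊆ univ.pi fun _ => Ico (0 : ℝ) 1) :
    (fun x i => Int.fract (x i)) ⁻¹' A = ⋃ k : ι → ℤ, (· - fun i => (k i : ℝ)) ⁻¹' A := by
  ext x
  simp [sub_intCast_mem_iff hA]

lemma pairwise_disjoint_preimage_sub_intCast {A : Set (ι → ℝ)}
    (hA : A ⊆ univ.pi fun _ => Ico (0 : ℝ) 1) :
    Pairwise (Disjoint on fun k : ι → ℤ => (· - fun i => (k i : ℝ)) ⁻¹' A) := by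
  intro k k' hkk'
  refine disjoint_left.2 fun x hx hx' => hkk' ?_
  rw [(sub_intCast_mem_iff hA x k).1 hx |>.1, (sub_intCast_mem_iff hA x k').1 hx' |>.1]

lemma map_fract_withDensity_apply [Fintype ι] {f : (ι → ℝ) → ℝ≥0∞} (hf : Measurable f)
    {A : Set (ι → ℝ)} (hAm : MeasurableSet A) (hA : A ⊆ univ.pi fun _ => Ico (0 : ℝ) 1) :
    (volume.withDensity f).map (fun x i => Int.fract (x i)) A =
      ∫⁻ y in A, ∑' k : ι → ℤ, f (y + fun i => (k i : ℝ)) := by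
  have hfract : Measurable fun (x : ι → ℝ) i => Int.fract (x i) := by fun_prop
  have hpre : ∀ k : ι → ℤ, MeasurableSet ((· - fun i => (k i : ℝ)) ⁻¹' A) :=
    fun k => hAm.preimage (measurable_id.sub_const _)
  have hsum : ∫⁻ y in A, ∑' k : ι → ℤ, f (y + fun i => (k i : ℝ)) =
      ∑' k : ι → ℤ, ∫⁻ y in A, f (y + fun i => (k i : ℝ)) :=
    lintegral_tsum fun k => (hf.comp (measurable_add_const _)).aemeasurable
  rw [Measure.map_apply hfract hAm, preimage_fract_eq_iUnion hA,
    measure_iUnion (pairwise_disjoint_preimage_sub_intCast hA) hpre, hsum]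
  refine tsum_congr fun k => ?_
  have htrans :=
    (measurePreserving_sub_right volume fun i => (k i : ℝ)).setLIntegral_comp_preimage_emb
      (MeasurableEquiv.subRight _).measurableEmbedding (fun y => f (y + fun i => (k i : ℝ))) A
  simp only [sub_add_cancel] at htrans
  rw [withDensity_apply _ (hpre k), htrans]

end Folding

lemma abs_toReal_setLIntegral_ofReal_sub_le {α : Type*} [MeasurableSpace α] {μ : Measure α}
    {A : Set α} (hAm : MeasurableSet A) (hA : μ A ≤ 1) {g : α → ℝ} {ε : ℝ} (hε : 0 ≤ ε)
    (hg : ∀ y ∈ A, |g y - 1| ≤ ε) :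
    |(∫⁻ y in A, ENNReal.ofReal (g y) ∂μ).toReal - (μ A).toReal| ≤ ε := by
  have hup : ∫⁻ y in A, ENNReal.ofReal (g y) ∂μ ≤ ENNReal.ofReal (1 + ε) * μ A := by
    rw [← setLIntegral_const]
    exact setLIntegral_mono measurable_const fun y hy =>
      ENNReal.ofReal_le_ofReal (by linarith [(abs_le.1 (hg y hy)).2])
  have hlo : ENNReal.ofReal (1 - ε) * μ A ≤ ∫⁻ y in A, ENNReal.ofReal (g y) ∂μ := by
    rw [← setLIntegral_const]
    exact setLIntegral_mono' hAm fun y hy =>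
      ENNReal.ofReal_le_ofReal (by linarith [(abs_le.1 (hg y hy)).1])
  have hfin : ENNReal.ofReal (1 + ε) * μ A ≠ ∞ :=
    ENNReal.mul_ne_top ENNReal.ofReal_ne_top (ne_top_of_le_ne_top ENNReal.one_ne_top hA)
  have hup' := ENNReal.toReal_mono hfin hup
  have hlo' := ENNReal.toReal_mono (ne_top_of_le_ne_top hfin hup) hlo
  rw [ENNReal.toReal_mul, ENNReal.toReal_ofReal (by linarith)] at hup'
  rw [ENNReal.toReal_mul, ENNReal.toReal_ofReal'] at hlo'
  have hv : (μ A).toReal ≤ 1 := ENNReal.toReal_le_of_le_ofReal zero_le_one (by simpa using hA)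
  have hv0 : 0 ≤ (μ A).toReal := ENNReal.toReal_nonneg
  rw [abs_sub_le_iff]
  constructor
  · nlinarith
  · nlinarith [le_max_left (1 - ε) 0]

lemma exp_neg_pi_mul_sq_le_inv_s3 {M σ : ℝ} (hM : 1 ≤ M) (hσ : √(log M / π) ≤ σ) :
    rexp (-π * σ ^ 2) ≤ M⁻¹ := by
  have hlog : log M ≤ π * σ ^ 2 := by
    have := pow_le_pow_left₀ (sqrt_nonneg _) hσ 2
    rw [sq_sqrt (div_nonneg (log_nonneg hM) pi_pos.le), div_le_iff₀ pi_pos] at this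
    linarith
  calc rexp (-π * σ ^ 2) ≤ rexp (-log M) := exp_le_exp.2 (by linarith)
    _ = M⁻¹ := by rw [exp_neg, exp_log (by linarith)]

lemma one_add_pow_le_one_add_mul_add_sq {a : ℝ} (ha : 0 ≤ a) {n : ℕ} (hna : n * a ≤ 1) :
    (1 + a) ^ n ≤ 1 + n * a + (n * a) ^ 2 := by
  calc (1 + a) ^ n ≤ rexp a ^ n := by gcongr; linarith [add_one_le_exp a]
    _ = rexp (n * a) := (exp_nat_mul a n).symm
    _ ≤ 1 + n * a + (n * a) ^ 2 := by
      have := abs_sub_le_iff.1 (abs_exp_sub_one_sub_id_le (x := n * a)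
        (by rw [abs_of_nonneg (by positivity)]; exact hna))
      linarith [this.1]

lemma div_add_sq_le_div_one_sub {s : ℝ} (hs0 : 0 < s) (hs1 : s < 1) :
    s / (1 - s ^ 2 / 4) + (s / (1 - s ^ 2 / 4)) ^ 2 ≤ s / (1 - s) := by
  have h4 : 0 < 1 - s ^ 2 / 4 := by nlinarith
  rw [div_pow, div_add_div _ _ h4.ne' (by positivity),
    div_le_div_iff₀ (by positivity) (by linarith)]
  nlinarith [pow_pos hs0 3, pow_pos hs0 4, pow_pos hs0 5, mul_pos hs0 h4]

lemma mul_add_sq_le_of_le_inv {n ε t : ℝ} (hn : 1 ≤ n) (hε : 0 < ε) (ht0 : 0 ≤ t)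
    (ht : t ≤ (2 * n * (1 + 1 / ε))⁻¹) :
    n * (2 * (t / (1 - t ^ 2))) + (n * (2 * (t / (1 - t ^ 2)))) ^ 2 ≤ ε := by
  set s := ε / (1 + ε)
  have hs0 : 0 < s := by positivity
  have hs1 : s < 1 := by rw [div_lt_one (by linarith)]; linarith
  have hε_eq : ε = s / (1 - s) := by simp only [s]; field_simp; ring
  have h2nt : 2 * n * t ≤ s := by
    have : (2 * n * (1 + 1 / ε))⁻¹ = s / (2 * n) := by simp only [s]; field_simp; ring
    rw [this, le_div_iff₀ (by positivity)] at ht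
    linarith
  have hts : t ≤ s / 2 := by nlinarith
  have hu : n * (2 * (t / (1 - t ^ 2))) ≤ s / (1 - s ^ 2 / 4) := by
    rw [← mul_div_assoc, ← mul_div_assoc, ← mul_assoc, mul_comm n]
    exact div_le_div₀ hs0.le h2nt (by nlinarith) (by nlinarith)
  have hu0 : 0 ≤ n * (2 * (t / (1 - t ^ 2))) := by
    have : 0 < 1 - t ^ 2 := by nlinarith
    positivity
  calc _ ≤ s / (1 - s ^ 2 / 4) + (s / (1 - s ^ 2 / 4)) ^ 2 := by gcongr
    _ ≤ ε := hε_eq ▸ div_add_sq_le_div_one_sub hs0 hs1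

/-- Let `n` be a positive integer, `ε ∈ (0, 1/3)`, and
`σ ≥ √(ln(2n(1 + 1/ε))/π)`. Let `γ` be the probability measure on `ℝⁿ` with Lebesgue density
`ρ_σ(x) = σ⁻ⁿ exp(−π‖x‖²/σ²)`, and let `μ` be the pushforward of `γ` under the coordinatewise
fractional-part map `mod₁ : ℝⁿ → [0,1)ⁿ`. Then for every Borel set `A ⊆ [0,1)ⁿ`,
`|μ(A) − λ(A)| ≤ ε`, where `λ` denotes Lebesgue measure; that is, the total variation distance
between the collapsed Gaussian distribution and the uniform distribution on `[0,1)ⁿ` is at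
most `ε`. -/
theorem collapsed_gaussian_close_to_uniform (n : ℕ) (hn : 0 < n) (ε : ℝ)
    (hε : ε ∈ Set.Ioo (0:ℝ) (1/3)) (σ : ℝ)
    (hσ : σ ≥ Real.sqrt (Real.log (2 * n * (1 + 1 / ε)) / Real.pi)) :
    let ρ : (Fin n → ℝ) → ℝ :=
      fun x => (σ ^ n)⁻¹ * Real.exp (-Real.pi * (∑ i, (x i) ^ 2) / σ ^ 2)
    let γ : Measure (Fin n → ℝ) := volume.withDensity fun x => ENNReal.ofReal (ρ x)
    let mod1 : (Fin n → ℝ) → (Fin n → ℝ) := fun x i => Int.fract (x i)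
    let μ : Measure (Fin n → ℝ) := γ.map mod1
    ∀ A : Set (Fin n → ℝ), MeasurableSet A →
      A ⊆ (Set.univ.pi fun _ => Set.Ico (0:ℝ) 1) →
      |(μ A).toReal - (volume A).toReal| ≤ ε := by
  intro ρ γ mod1 μ A hAm hA
  have hε0 : 0 < ε := hε.1
  have hn1 : (1 : ℝ) ≤ n := by exact_mod_cast hn
  have hM : 1 < 2 * n * (1 + 1 / ε) := by nlinarith [one_div_pos.2 hε0]
  have hσ0 : 0 < σ := (sqrt_pos.2 (div_pos (log_pos hM) pi_pos)).trans_le hσ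
  set t := rexp (-π * σ ^ 2)
  set a := 2 * (t / (1 - t ^ 2))
  have ha0 : 0 ≤ a := by
    have : t < 1 := exp_lt_one_iff.2 (by nlinarith [mul_pos pi_pos (pow_pos hσ0 2)])
    have : 0 < 1 - t ^ 2 := by nlinarith [exp_pos (-π * σ ^ 2)]
    positivity
  have hna : n * a + (n * a) ^ 2 ≤ ε :=
    mul_add_sq_le_of_le_inv hn1 hε0 (exp_pos _).le (exp_neg_pi_mul_sq_le_inv_s3 hM.le hσ)
  have hpow : (1 + a) ^ n ≤ 1 + ε :=
    (one_add_pow_le_one_add_mul_add_sq ha0 (by nlinarith [hε.2])).trans (by linarith)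
  have hμA : μ A = ∫⁻ y in A,
      ENNReal.ofReal (∏ i, σ⁻¹ * ∑' m : ℤ, rexp (-π * (y i + m) ^ 2 / σ ^ 2)) := by
    rw [map_fract_withDensity_apply (by fun_prop) hAm hA]
    exact lintegral_congr fun y => tsum_ofReal_gaussian_add_intCast hσ0 y
  have hvol : volume A ≤ 1 := (measure_mono hA).trans (by simp [volume_pi_pi])
  rw [hμA]
  refine abs_toReal_setLIntegral_ofReal_sub_le hAm hvol hε0.le fun y _ => ?_
  calc _ ≤ (1 + a) ^ n - 1 := by
        have := abs_prod_sub_one_le Finset.univ fun i _ =>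
          abs_inv_mul_tsum_exp_neg_sq_add_int_sub_one_le hσ0 (y i)
        rwa [Finset.card_univ, Fintype.card_fin] at this
    _ ≤ ε := by linarith
end
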